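/- Let (H_i)_{i∈I} be a nonempty family of graphs and let G be a graph isomorphic to an induced subgraph of the direct product ∏_{i∈I} H_i. Then there exist a subsemigroup B of the direct product ∏_{i∈I} A(H_i) of the adjacency semigroups that is closed under reversion, and a surjective unary semigroup homomorphism from B onto the adjacency semigroup A(G). -/
import Mathlib


/-- Multiplication of the adjacency semigroup `A(G)` of a graph `G = ⟨V; r⟩`:
the carrier is `Option (V × V)` with `none` playing the role of the zero element. -/
noncomputable def adjMul {V : Type*} (r : V → V → Prop) :
    Option (V × V) → Option (V × V) → Option (V × V)
  | some (x, y), some (z, t) =>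
      @ite _ (r y z) (Classical.propDecidable _) (some (x, t)) none
  | _, _ => none

/-- Reversion in the adjacency semigroup: `(x,y)' = (y,x)` and `0' = 0`. -/
def adjStar {V : Type*} : Option (V × V) → Option (V × V)
  | some (x, y) => some (y, x)
  | none => none

theorem adjMul_none_left {V : Type*} (r : V → V → Prop) (g : Option (V × V)) :
    adjMul r none g = none := by cases g with
  | none => rfl
  | some p => rfl

theorem adjMul_none_right {V : Type*} (r : V → V → Prop) (f : Option (V × V)) :
    adjMul r f none = none := by cases f with
  | none => rfl
  | some p => rfl

/-- Lemma: if a graph `G = ⟨VG; rG⟩` is (isomorphic to) an induced subgraph of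
the direct product of a nonempty family of graphs `(⟨W i; rel i⟩)_{i : I}`,
then the adjacency semigroup `A(G)` is a homomorphic image of a subsemigroup,
closed under reversion, of the direct product of the adjacency semigroups
`A(⟨W i; rel i⟩)`. -/
theorem adjacency_HSP_of_induced_subgraph_of_product
    {I : Type u} [Nonempty I] {W : I → Type v} (rel : ∀ i, W i → W i → Prop)
    {VG : Type w} (rG : VG → VG → Prop)
    (e : VG → ∀ i, W i) (he : Function.Injective e)
    (hind : ∀ a b : VG, rG a b ↔ ∀ i, rel i (e a i) (e b i)) :
    ∃ (B : Set (∀ i, Option (W i × W i)))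
      (φ : (∀ i, Option (W i × W i)) → Option (VG × VG)),
      (∀ f ∈ B, ∀ g ∈ B,
        (fun i => adjMul (rel i) (f i) (g i)) ∈ B ∧
          φ (fun i => adjMul (rel i) (f i) (g i)) = adjMul rG (φ f) (φ g)) ∧
      (∀ f ∈ B,
        (fun i => adjStar (f i)) ∈ B ∧
          φ (fun i => adjStar (f i)) = adjStar (φ f)) ∧
      (∀ y : Option (VG × VG), ∃ f ∈ B, φ f = y) := by
  classical
  set diag : VG → VG → ∀ i, Option (W i × W i) :=
    fun a b i => some (e a i, e b i) with hdiag
  set P : (∀ i, Option (W i × W i)) → Prop :=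
    fun f => ∃ p : VG × VG, f = diag p.1 p.2 with hPdef
  set φ : (∀ i, Option (W i × W i)) → Option (VG × VG) :=
    fun f => if h : P f then some (Classical.choose h) else none with hφ
  -- φ of a diagonal element
  have hφdiag : ∀ a b, φ (diag a b) = some (a, b) := by
    intro a b
    have hp : P (diag a b) := ⟨(a, b), rfl⟩
    have hspec := Classical.choose_spec hp
    have hcoord : ∀ i, (e a i, e b i) = (e (Classical.choose hp).1 i,
        e (Classical.choose hp).2 i) := by
      intro i
      have := congrFun hspec i
      simp only [hdiag] at this
      exact Option.some.inj this
    have ha : a = (Classical.choose hp).1 :=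
      he (funext fun i => congrArg Prod.fst (hcoord i))
    have hb : b = (Classical.choose hp).2 :=
      he (funext fun i => congrArg Prod.snd (hcoord i))
    simp only [hφ, dif_pos hp]
    exact congrArg some (Prod.ext ha.symm hb.symm)
  -- φ of an element with a `none` coordinate
  have hφzero : ∀ f : ∀ i, Option (W i × W i), (∃ i, f i = none) → φ f = none := by
    intro f ⟨i, hi⟩
    have hnp : ¬ P f := by
      rintro ⟨p, rfl⟩
      simp [hdiag] at hi
    simp only [hφ, dif_neg hnp]
  refine ⟨{f | P f ∨ ∃ i, f i = none}, φ, ?_, ?_, ?_⟩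
  · rintro f hf g hg
    rcases hf with ⟨⟨a, b⟩, rfl⟩ | ⟨i0, hi0⟩
    · rcases hg with ⟨⟨c, d⟩, rfl⟩ | ⟨i0, hi0⟩
      · -- both diagonal
        by_cases hbc : rG b c
        · have hrel := (hind b c).1 hbc
          have hprod : (fun i => adjMul (rel i) (diag a b i) (diag c d i)) = diag a d := by
            funext i
            simp only [hdiag, adjMul]
            rw [if_pos (hrel i)]
          rw [hprod, hφdiag, hφdiag, hφdiag]
          simp only [adjMul]
          rw [if_pos hbc]
          exact ⟨Or.inl ⟨(a, d), rfl⟩, rfl⟩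
        · obtain ⟨i0, hi0⟩ : ∃ i, ¬ rel i (e b i) (e c i) := by
            by_contra h
            push_neg at h
            exact hbc ((hind b c).2 h)
          have hz : adjMul (rel i0) (diag a b i0) (diag c d i0) = none := by
            simp only [hdiag, adjMul]
            rw [if_neg hi0]
          refine ⟨Or.inr ⟨i0, hz⟩, ?_⟩
          rw [hφzero _ ⟨i0, hz⟩, hφdiag, hφdiag]
          simp only [adjMul]
          rw [if_neg hbc]
      · -- g has a none coordinate
        have hz : adjMul (rel i0) (diag a b i0) (g i0) = none := by
          rw [hi0, adjMul_none_right]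
        refine ⟨Or.inr ⟨i0, hz⟩, ?_⟩
        rw [hφzero _ ⟨i0, hz⟩, hφzero g ⟨i0, hi0⟩, adjMul_none_right]
    · -- f has a none coordinate
      have hz : adjMul (rel i0) (f i0) (g i0) = none := by
        rw [hi0, adjMul_none_left]
      refine ⟨Or.inr ⟨i0, hz⟩, ?_⟩
      rw [hφzero _ ⟨i0, hz⟩, hφzero f ⟨i0, hi0⟩, adjMul_none_left]
  · rintro f hf
    rcases hf with ⟨⟨a, b⟩, rfl⟩ | ⟨i0, hi0⟩
    · have hstar : (fun i => adjStar (diag a b i)) = diag b a := by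
        funext i
        simp [hdiag, adjStar]
      rw [hstar]
      exact ⟨Or.inl ⟨(b, a), rfl⟩, by rw [hφdiag, hφdiag]; rfl⟩
    · have hz : adjStar (f i0) = none := by rw [hi0]; rfl
      refine ⟨Or.inr ⟨i0, hz⟩, ?_⟩
      rw [hφzero _ ⟨i0, hz⟩, hφzero f ⟨i0, hi0⟩]
      rfl
  · rintro (_ | ⟨a, b⟩)
    · exact ⟨fun _ => none, Or.inr ⟨Classical.arbitrary I, rfl⟩,
        hφzero _ ⟨Classical.arbitrary I, rfl⟩⟩
    · exact ⟨diag a b, Or.inl ⟨(a, b), rfl⟩, hφdiag a b⟩
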